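/- arXiv:2011.03693 — 3 statements merged into one kernel-verified Lean document; each statement's English description precedes it below -/
import Mathlib

section
/- For v = -1/m with m a positive integer, and k₁, ..., k_N ∈ ℕ, the product ∏_{i=1}^N â_{k_i}(v) is at least â_{k₁+...+k_N}(v), where â_k(v) := ∏_{j=0}^{k-1}(1+vj). -/
noncomputable def ahat (k : ℕ) (v : ℝ) : ℝ := ∏ j ∈ Finset.range k, (1 + v * j)

/-! Since `1 - j / m = (m - j) / m`, at `v = -1/m` the product `ahat k v` is the falling factorial
`m (m - 1) ⋯ (m - k + 1)` divided by `m ^ k`. The powers of `m` on both sides agree, so the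
inequality reduces to `m.descFactorial (∑ kᵢ) ≤ ∏ m.descFactorial kᵢ`, which follows from
`m.descFactorial (a + b) = m.descFactorial a * (m - a).descFactorial b` and the monotonicity of
`descFactorial` in its base. -/

open Finset

theorem Nat.descFactorial_add_le (n a b : ℕ) :
    n.descFactorial (a + b) ≤ n.descFactorial a * n.descFactorial b := by
  rw [← descFactorial_mul_descFactorial (Nat.le_add_right a b), Nat.add_sub_cancel_left, mul_comm]
  gcongr
  exact Nat.sub_le n a

theorem Nat.descFactorial_sum_le_prod {ι : Type*} (n : ℕ) (s : Finset ι) (k : ι → ℕ) :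
    n.descFactorial (∑ i ∈ s, k i) ≤ ∏ i ∈ s, n.descFactorial (k i) := by
  induction s using Finset.cons_induction with
  | empty => simp
  | cons a s _ ih =>
    rw [sum_cons, prod_cons]
    exact (descFactorial_add_le n _ _).trans (Nat.mul_le_mul_left _ ih)

theorem ahat_neg_inv_natCast {m : ℕ} (hm : m ≠ 0) (k : ℕ) :
    ahat k (-1 / m) = m.descFactorial k / (m : ℝ) ^ k := by
  rw [← descPochhammer_eval_eq_descFactorial, descPochhammer_eval_eq_prod_range, ahat,
    pow_eq_prod_const, ← prod_div_distrib]
  refine prod_congr rfl fun j _ => ?_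
  field_simp
  ring

theorem ahat_prod_ge (m : ℕ) (hm : 1 ≤ m) (N : ℕ) (k : Fin N → ℕ) :
    ahat (∑ i, k i) (-1 / m) ≤ ∏ i, ahat (k i) (-1 / m) := by
  simp_rw [ahat_neg_inv_natCast (Nat.one_le_iff_ne_zero.mp hm)]
  rw [prod_div_distrib, prod_pow_eq_pow_sum]
  gcongr
  exact_mod_cast Nat.descFactorial_sum_le_prod m univ k
end

section
/- Define c(k, ℓ) := ∑ 1/(a₁·a₂···a_ℓ), where the sum runs over all ℓ-tuples of positive integers (a₁,...,a_ℓ) with a₁+...+a_ℓ = k. Then for all integers k ≥ 1 and ℓ ≥ 1, c(k, ℓ) ≤ (2 log(e k))^{ℓ-1} / k. -/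
/-- `c(k, ℓ)`: sum over compositions of `k` into `ℓ` positive parts of the
reciprocal of the product of the parts. -/
noncomputable def compSum (k ℓ : ℕ) : ℝ :=
  ∑ a ∈ (Fintype.piFinset fun _ : Fin ℓ => Finset.range (k + 1)).filter
      (fun a => (∀ i, 1 ≤ a i) ∧ ∑ i, a i = k),
    ∏ i, (1 : ℝ) / (a i)

/-!
Splitting off the first part gives `c(k, ℓ + 1) = ∑_{a + b = k} c(b, ℓ) / a`. By induction
`c(b, ℓ) ≤ C / b`, where `C = (2 (1 + log k))^(ℓ - 1)` is monotone in `k`, and the partial fraction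
`1 / (a b) = (1 / a + 1 / b) / k` bounds the remaining sum by `2 H_k / k ≤ 2 (1 + log k) / k`.
-/

open Finset

theorem Finset.Nat.sum_antidiagonalTuple_succ {M : Type*} [AddCommMonoid M] (ℓ n : ℕ)
    (f : (Fin (ℓ + 1) → ℕ) → M) :
    ∑ a ∈ Nat.antidiagonalTuple (ℓ + 1) n, f a =
      ∑ p ∈ antidiagonal n, ∑ a ∈ Nat.antidiagonalTuple ℓ p.2, f (Fin.cons p.1 a) := by
  simp only [sum_eq_multiset_sum]
  change ((List.Nat.antidiagonalTuple (ℓ + 1) n : Multiset _).map f).sum =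
    (((List.Nat.antidiagonal n : List (ℕ × ℕ)) : Multiset (ℕ × ℕ)).map fun p =>
      ((List.Nat.antidiagonalTuple ℓ p.2 : Multiset _).map fun a => f (Fin.cons p.1 a)).sum).sum
  simp only [Multiset.map_coe, Multiset.sum_coe, List.Nat.antidiagonalTuple, List.flatMap,
    List.map_flatten, List.sum_flatten, List.map_map, Function.comp_def]

theorem sum_antidiagonal_one_div_fst (k : ℕ) :
    ∑ p ∈ antidiagonal k, 1 / (p.1 : ℝ) = harmonic k := by
  rw [Nat.sum_antidiagonal_eq_sum_range_succ (fun i _ => 1 / (i : ℝ)), sum_range_succ',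
    harmonic]
  push_cast
  simp

-- Equality when `a, b > 0`; the inequality also covers the junk value `1 / 0 = 0`.
theorem one_div_mul_one_div_le_of_add_eq {a b k : ℕ} (h : a + b = k) :
    1 / (a : ℝ) * (1 / b) ≤ (1 / a + 1 / b) / k := by
  rcases Nat.eq_zero_or_pos a with rfl | ha
  · rw [Nat.cast_zero, div_zero, zero_mul]; positivity
  rcases Nat.eq_zero_or_pos b with rfl | hb
  · rw [Nat.cast_zero, div_zero, mul_zero]; positivity
  subst h
  apply le_of_eq
  field_simp
  push_cast
  ring

theorem sum_antidiagonal_one_div_mul_one_div_le (k : ℕ) :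
    ∑ p ∈ antidiagonal k, 1 / (p.1 : ℝ) * (1 / p.2) ≤ 2 * harmonic k / k := by
  calc ∑ p ∈ antidiagonal k, 1 / (p.1 : ℝ) * (1 / p.2)
      ≤ ∑ p ∈ antidiagonal k, (1 / (p.1 : ℝ) + 1 / p.2) / k :=
        sum_le_sum fun p hp => one_div_mul_one_div_le_of_add_eq (mem_antidiagonal.1 hp)
    _ = (∑ p ∈ antidiagonal k, 1 / (p.1 : ℝ) + ∑ p ∈ antidiagonal k, 1 / (p.swap.1 : ℝ)) / k := by
        rw [← sum_div, sum_add_distrib]; rfl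
    _ = 2 * harmonic k / k := by
        rw [Nat.sum_antidiagonal_swap (f := fun p => 1 / (p.1 : ℝ)),
          sum_antidiagonal_one_div_fst]
        ring

-- Tuples with a zero part contribute `∏ i, 1 / a i = 0` (as `1 / 0 = 0`), so the positivity
-- constraint of `compSum` can be dropped.
theorem compSum_eq_sum_antidiagonalTuple (k ℓ : ℕ) :
    compSum k ℓ = ∑ a ∈ Nat.antidiagonalTuple ℓ k, ∏ i, 1 / (a i : ℝ) := by
  refine sum_subset (fun a ha => ?_) fun a ha hna => ?_
  · exact Nat.mem_antidiagonalTuple.2 (mem_filter.1 ha).2.2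
  · have hsum := Nat.mem_antidiagonalTuple.1 ha
    obtain ⟨i, hi⟩ : ∃ i, a i = 0 := by
      by_contra! hpos
      refine hna (mem_filter.2 ⟨Fintype.mem_piFinset.2 fun i => ?_, fun i => ?_, hsum⟩)
      · exact mem_range.2 (Nat.lt_succ_of_le (hsum ▸ single_le_sum (by simp) (mem_univ i)))
      · exact Nat.one_le_iff_ne_zero.2 (hpos i)
    exact prod_eq_zero (mem_univ i) (by simp [hi])

theorem compSum_one (k : ℕ) : compSum k 1 = 1 / k := by
  simp [compSum_eq_sum_antidiagonalTuple]

theorem compSum_succ (k ℓ : ℕ) :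
    compSum k (ℓ + 1) = ∑ p ∈ antidiagonal k, 1 / (p.1 : ℝ) * compSum p.2 ℓ := by
  simp only [compSum_eq_sum_antidiagonalTuple, Nat.sum_antidiagonalTuple_succ,
    Fin.prod_univ_succ, Fin.cons_zero, Fin.cons_succ, mul_sum]

theorem compSum_succ_le {k ℓ : ℕ} {B : ℝ} (hB : 0 ≤ B)
    (h : ∀ m ≤ k, compSum m ℓ ≤ B / m) : compSum k (ℓ + 1) ≤ 2 * harmonic k * B / k := by
  rw [compSum_succ]
  calc ∑ p ∈ antidiagonal k, 1 / (p.1 : ℝ) * compSum p.2 ℓ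
      ≤ ∑ p ∈ antidiagonal k, 1 / (p.1 : ℝ) * (B / p.2) := by
        gcongr with p hp
        exact h p.2 (HasAntidiagonal.antidiagonal.snd_le hp)
    _ = B * ∑ p ∈ antidiagonal k, 1 / (p.1 : ℝ) * (1 / p.2) := by
        rw [mul_sum]; congr 1 with p; ring
    _ ≤ B * (2 * harmonic k / k) := by
        gcongr; exact sum_antidiagonal_one_div_mul_one_div_le k
    _ = 2 * harmonic k * B / k := by ring

theorem compSum_le_general (k ℓ : ℕ) (hℓ : 1 ≤ ℓ) :
    compSum k ℓ ≤ (2 * (1 + Real.log k)) ^ (ℓ - 1) / k := by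
  induction ℓ, hℓ using Nat.le_induction generalizing k with
  | base => simp [compSum_one]
  | succ ℓ hℓ ih =>
    have hlog : ∀ m ≤ k, Real.log m ≤ Real.log k := by
      intro m hm
      rcases Nat.eq_zero_or_pos m with rfl | hm0
      · simp [Real.log_natCast_nonneg]
      · gcongr
    calc compSum k (ℓ + 1)
        ≤ 2 * harmonic k * (2 * (1 + Real.log k)) ^ (ℓ - 1) / k := by
          refine compSum_succ_le (by positivity) fun m hm => (ih m).trans ?_
          gcongr (2 * (1 + ?_)) ^ _ / _
          exact hlog m hm
      _ ≤ 2 * (1 + Real.log k) * (2 * (1 + Real.log k)) ^ (ℓ - 1) / k := by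
          gcongr; exact harmonic_le_one_add_log k
      _ = (2 * (1 + Real.log k)) ^ (ℓ + 1 - 1) / k := by
          rw [← pow_succ', Nat.sub_add_cancel hℓ, Nat.add_sub_cancel]

theorem compSum_le (k ℓ : ℕ) (hk : 1 ≤ k) (hℓ : 1 ≤ ℓ) :
    compSum k ℓ ≤ (2 * (1 + Real.log k)) ^ (ℓ - 1) / k :=
  compSum_le_general k ℓ hℓ
end

section
/- For all integers k ≥ 1 and ℓ ≥ 1, the absolute value of the coefficient of t^k in the formal power series (arctan t)^ℓ is at most c(k, ℓ) := ∑_{a₁+...+a_ℓ=k, a_i ≥ 1} 1/(a₁···a_ℓ), and in particular at most (2 log(ek))^{ℓ-1}/k. Moreover this coefficient vanishes unless k ≡ ℓ (mod 2). -/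
/-- The formal power series of `arctan`. -/
noncomputable def arctanSeries : PowerSeries ℝ :=
  PowerSeries.mk fun k => if Odd k then (-1 : ℝ) ^ ((k - 1) / 2) / k else 0

/-!
Coefficientwise `|arctan t| ≤ -log (1 - t) = ∑ t ^ a / a`, such a domination passes to products
and hence to powers, and the coefficients of `(-log (1 - t)) ^ ℓ` are exactly `c(k, ℓ)`. Since
`c(k, ℓ + 1) = ∑_{p + q = k} c(p, ℓ) / q`, the bound `c(k, ℓ) ≤ (2 (1 + log k)) ^ (ℓ - 1) / k`
follows by induction on `ℓ` from `1 / (p q) = (1 / p + 1 / q) / k` and `H_k ≤ 1 + log k`.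
The parity statement holds because `arctan` is odd.
-/

open Finset PowerSeries

namespace PowerSeries

variable {R : Type*}

theorem coeff_pow_eq_sum_piAntidiag [CommSemiring R] (φ : R⟦X⟧) (ℓ n : ℕ) :
    coeff n (φ ^ ℓ) = ∑ a ∈ piAntidiag (univ : Finset (Fin ℓ)) n, ∏ i, coeff (a i) φ := by
  rw [← Fin.prod_const, coeff_prod, finsuppAntidiag, sum_map,
    ← sum_attach (piAntidiag univ n)]
  rfl

theorem coeff_pow_eq_zero_of_mod_two_ne [CommSemiring R] {φ : R⟦X⟧}
    (hφ : ∀ n, Even n → coeff n φ = 0) (ℓ n : ℕ) (hn : n % 2 ≠ ℓ % 2) :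
    coeff n (φ ^ ℓ) = 0 := by
  induction ℓ generalizing n with
  | zero => rw [pow_zero, coeff_one, if_neg (by omega)]
  | succ ℓ ih =>
    rw [pow_succ, coeff_mul]
    refine sum_eq_zero fun x hx => ?_
    rw [HasAntidiagonal.mem_antidiagonal] at hx
    by_cases hq : Even x.2
    · rw [hφ _ hq, mul_zero]
    · have hq1 : x.2 % 2 = 1 := Nat.odd_iff.mp (Nat.not_even_iff_odd.mp hq)
      rw [ih x.1 (by omega), zero_mul]

variable [CommRing R] [LinearOrder R] [IsOrderedRing R]

theorem abs_coeff_mul_le {f g F G : R⟦X⟧} (hf : ∀ n, |coeff n f| ≤ coeff n F)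
    (hg : ∀ n, |coeff n g| ≤ coeff n G) (n : ℕ) :
    |coeff n (f * g)| ≤ coeff n (F * G) := by
  rw [coeff_mul, coeff_mul]
  refine (abs_sum_le_sum_abs _ _).trans (sum_le_sum fun x _ => ?_)
  rw [abs_mul]
  exact mul_le_mul (hf _) (hg _) (abs_nonneg _) ((abs_nonneg _).trans (hf _))

theorem abs_coeff_pow_le {f F : R⟦X⟧} (hf : ∀ n, |coeff n f| ≤ coeff n F) (ℓ n : ℕ) :
    |coeff n (f ^ ℓ)| ≤ coeff n (F ^ ℓ) := by
  induction ℓ generalizing n with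
  | zero => rw [pow_zero, pow_zero, coeff_one]; split_ifs <;> simp
  | succ ℓ ih => rw [pow_succ, pow_succ]; exact abs_coeff_mul_le ih hf n

end PowerSeries

theorem sum_antidiagonal_inv_mul_inv_le (k : ℕ) :
    ∑ x ∈ antidiagonal k, ((x.1 : ℝ)⁻¹ * (x.2 : ℝ)⁻¹) ≤ 2 * (1 + Real.log k) / k := by
  -- `k / (p q) = 1 / p + 1 / q` when `p + q = k`, and the junk value `0⁻¹ = 0` keeps `≤`
  have hterm : ∀ x ∈ antidiagonal k,
      (k : ℝ) * ((x.1 : ℝ)⁻¹ * (x.2 : ℝ)⁻¹) ≤ (x.1 : ℝ)⁻¹ + (x.2 : ℝ)⁻¹ := by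
    rintro ⟨p, q⟩ hx
    rw [HasAntidiagonal.mem_antidiagonal] at hx
    subst hx
    rcases p.eq_zero_or_pos with rfl | hp
    · simp
    rcases q.eq_zero_or_pos with rfl | hq
    · simp
    apply le_of_eq
    field_simp
    push_cast
    ring
  have hharm : ∑ x ∈ antidiagonal k, (x.1 : ℝ)⁻¹ = harmonic k := by
    rw [Nat.sum_antidiagonal_eq_sum_range_succ_mk, sum_range_succ', harmonic]
    push_cast
    simp
  rcases k.eq_zero_or_pos with rfl | hk
  · simp
  rw [le_div_iff₀' (by positivity), mul_sum]
  calc ∑ x ∈ antidiagonal k, (k : ℝ) * ((x.1 : ℝ)⁻¹ * (x.2 : ℝ)⁻¹)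
      ≤ ∑ x ∈ antidiagonal k, ((x.1 : ℝ)⁻¹ + (x.2 : ℝ)⁻¹) := sum_le_sum hterm
    _ = 2 * harmonic k := by
      rw [sum_add_distrib, ← Nat.sum_antidiagonal_swap (f := fun x => (x.2 : ℝ)⁻¹)]
      simp only [Prod.snd_swap, hharm, two_mul]
    _ ≤ 2 * (1 + Real.log k) := by gcongr; exact harmonic_le_one_add_log k

noncomputable def negLogOneSubSeries : PowerSeries ℝ :=
  PowerSeries.mk fun a => (1 : ℝ) / a

theorem coeff_negLogOneSubSeries_nonneg (n : ℕ) : 0 ≤ coeff n negLogOneSubSeries := by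
  rw [negLogOneSubSeries, coeff_mk]
  positivity

theorem compSum_eq_coeff_negLogOneSubSeries_pow (k ℓ : ℕ) :
    compSum k ℓ = coeff k (negLogOneSubSeries ^ ℓ) := by
  rw [coeff_pow_eq_sum_piAntidiag, compSum]
  simp only [negLogOneSubSeries, coeff_mk]
  -- tuples with a zero part contribute `1 / 0 = 0`
  refine sum_subset (fun a ha => ?_) (fun a ha hna => ?_)
  · simp only [mem_filter] at ha
    simp [ha.2.2]
  · simp only [mem_piAntidiag, mem_univ, implies_true, and_true] at ha
    have hle : ∀ i, a i ≤ k := fun i =>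
      ha ▸ single_le_sum (fun j _ => Nat.zero_le (a j)) (mem_univ i)
    obtain ⟨i, hi⟩ : ∃ i, a i = 0 := by
      by_contra! h
      exact hna (by simp [Nat.lt_succ_of_le (hle _), Nat.one_le_iff_ne_zero, h, ha])
    exact prod_eq_zero (mem_univ i) (by simp [hi])

theorem coeff_negLogOneSubSeries_pow_le {ℓ : ℕ} (hℓ : 1 ≤ ℓ) (k : ℕ) :
    coeff k (negLogOneSubSeries ^ ℓ) ≤ (2 * (1 + Real.log k)) ^ (ℓ - 1) / k := by
  induction ℓ, hℓ using Nat.le_induction generalizing k with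
  | base => simp [negLogOneSubSeries]
  | succ ℓ hℓ ih =>
    set C := (2 * (1 + Real.log k)) ^ (ℓ - 1) with hC
    have hcoeff : ∀ p ≤ k, coeff p (negLogOneSubSeries ^ ℓ) ≤ C * (p : ℝ)⁻¹ := by
      intro p hp
      rcases p.eq_zero_or_pos with rfl | hp0
      · simpa using ih 0
      refine (ih p).trans ?_
      rw [div_eq_mul_inv, hC]
      gcongr
    have hfactor : ∀ x ∈ antidiagonal k, coeff x.1 (negLogOneSubSeries ^ ℓ) *
        coeff x.2 negLogOneSubSeries ≤ C * ((x.1 : ℝ)⁻¹ * (x.2 : ℝ)⁻¹) := by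
      intro x hx
      rw [HasAntidiagonal.mem_antidiagonal] at hx
      calc coeff x.1 (negLogOneSubSeries ^ ℓ) * coeff x.2 negLogOneSubSeries
          ≤ C * (x.1 : ℝ)⁻¹ * coeff x.2 negLogOneSubSeries :=
            mul_le_mul_of_nonneg_right (hcoeff _ (by omega)) (coeff_negLogOneSubSeries_nonneg _)
        _ = C * ((x.1 : ℝ)⁻¹ * (x.2 : ℝ)⁻¹) := by
            rw [negLogOneSubSeries, coeff_mk, one_div, mul_assoc]
    calc coeff k (negLogOneSubSeries ^ (ℓ + 1))
        ≤ ∑ x ∈ antidiagonal k, C * ((x.1 : ℝ)⁻¹ * (x.2 : ℝ)⁻¹) := by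
          rw [pow_succ, coeff_mul]; exact sum_le_sum hfactor
      _ ≤ C * (2 * (1 + Real.log k) / k) := by
          rw [← mul_sum]
          exact mul_le_mul_of_nonneg_left (sum_antidiagonal_inv_mul_inv_le k) (by positivity)
      _ = (2 * (1 + Real.log k)) ^ (ℓ + 1 - 1) / k := by
          rw [Nat.add_sub_cancel, ← Nat.sub_add_cancel hℓ, pow_succ]
          ring

theorem abs_coeff_arctanSeries_le (n : ℕ) :
    |coeff n arctanSeries| ≤ coeff n negLogOneSubSeries := by
  rw [arctanSeries, negLogOneSubSeries, coeff_mk, coeff_mk]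
  split_ifs
  · rw [abs_div, abs_pow, abs_neg, abs_one, one_pow, Nat.abs_cast]
  · simp

theorem coeff_arctanSeries_of_even {n : ℕ} (hn : Even n) : coeff n arctanSeries = 0 := by
  rw [arctanSeries, coeff_mk, if_neg (Nat.not_odd_iff_even.mpr hn)]

theorem arctan_pow_coeff_bound_general (k ℓ : ℕ) (hℓ : 1 ≤ ℓ) :
    |PowerSeries.coeff k (arctanSeries ^ ℓ)| ≤ compSum k ℓ ∧
    |PowerSeries.coeff k (arctanSeries ^ ℓ)| ≤ (2 * (1 + Real.log k)) ^ (ℓ - 1) / k ∧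
    (¬ (k % 2 = ℓ % 2) → PowerSeries.coeff k (arctanSeries ^ ℓ) = 0) := by
  have hmajorant : |coeff k (arctanSeries ^ ℓ)| ≤ coeff k (negLogOneSubSeries ^ ℓ) :=
    abs_coeff_pow_le abs_coeff_arctanSeries_le ℓ k
  rw [compSum_eq_coeff_negLogOneSubSeries_pow]
  exact ⟨hmajorant, hmajorant.trans (coeff_negLogOneSubSeries_pow_le hℓ k),
    coeff_pow_eq_zero_of_mod_two_ne (fun _ => coeff_arctanSeries_of_even) ℓ k⟩

theorem arctan_pow_coeff_bound (k ℓ : ℕ) (hk : 1 ≤ k) (hℓ : 1 ≤ ℓ) :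
    |PowerSeries.coeff k (arctanSeries ^ ℓ)| ≤ compSum k ℓ ∧
    |PowerSeries.coeff k (arctanSeries ^ ℓ)| ≤ (2 * (1 + Real.log k)) ^ (ℓ - 1) / k ∧
    (¬ (k % 2 = ℓ % 2) → PowerSeries.coeff k (arctanSeries ^ ℓ) = 0) :=
  arctan_pow_coeff_bound_general k ℓ hℓ
end
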